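/- (Lemma on projectability of the Poincaré–Cartan form, mechanics.) Let k ≥ 1 and let s be an integer with k−1 ≤ s ≤ 2k−2, and let L : J^k → ℝ be a smooth Lagrangian. The following are equivalent: (1) the functions L^r_α (r = 1, …, k; α = 1, …, n) and L − Σ_{r=1}^{k} Σ_α L^r_α q_r^α are all π^(2k−1)_s-basic; (2) for every point p ∈ J^(2k−1) and every vector v ∈ ℝ × (ℝ^n)^(2k) whose components along the t-direction and along the q_0-, …, q_s-directions all vanish, the covector i(v) dΘ_L(p) = dΘ_L(p)(v, ·) is zero; (3) ∂L^r_α/∂q_j^β = 0 identically on J^(2k−1) for every r = 1, …, k, every j with s < j ≤ 2k−1, and all α, β. -/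

import Mathlib

noncomputable section

/-- The `j`-th order jet space `J^j = ℝ × (ℝ^n)^(j+1)` of curves in `ℝ^n`,
with coordinates `(t, q_0, …, q_j)`. -/
abbrev Jet (n j : ℕ) : Type := ℝ × (Fin (j + 1) → Fin n → ℝ)

namespace Jet

variable {n : ℕ}

/-- The projection (truncation) `J^j → J^s` forgetting the coordinates `q_i` for `i > s`
(padding with `0` in the irrelevant case `s > j`). -/
def projTo {j : ℕ} (s : ℕ) (p : Jet n j) : Jet n s :=
  (p.1, fun i α => if h : (i : ℕ) < j + 1 then p.2 ⟨i, h⟩ α else 0)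

/-- The coordinate function `q_i^α` (zero if out of range). -/
def coordq {j : ℕ} (i : ℕ) (α : Fin n) (p : Jet n j) : ℝ :=
  if h : i < j + 1 then p.2 ⟨i, h⟩ α else 0

/-- The tangent vector in the `t`-direction. -/
def vt {j : ℕ} : Jet n j := (1, 0)

/-- The tangent vector in the `q_i^α`-direction (zero vector if `i` is out of range). -/
def vq {j : ℕ} (i : ℕ) (α : Fin n) : Jet n j :=
  (0, fun i' α' => if (i' : ℕ) = i ∧ α' = α then 1 else 0)

/-- The partial derivative `∂f/∂t`. -/
def pdt {j : ℕ} (f : Jet n j → ℝ) (p : Jet n j) : ℝ := fderiv ℝ f p vt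

/-- The partial derivative `∂f/∂q_i^α`. -/
def pdq {j : ℕ} (i : ℕ) (α : Fin n) (f : Jet n j → ℝ) (p : Jet n j) : ℝ :=
  fderiv ℝ f p (vq i α)

/-- The total time derivative `D_t f : J^(j+1) → ℝ` of a function `f : J^j → ℝ`:
`D_t f = ∂f/∂t + Σ_{i=0}^{j} Σ_α q_(i+1)^α ∂f/∂q_i^α`. -/
def Dt {j : ℕ} (f : Jet n j → ℝ) (p : Jet n (j + 1)) : ℝ :=
  pdt f (projTo j p) +
    ∑ i : Fin (j + 1), ∑ α : Fin n, p.2 i.succ α * pdq (i : ℕ) α f (projTo j p)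

/-- The iterated total time derivative `D_t^i : C^∞(J^j) → C^∞(J^(j+i))`. -/
def DtIter {j : ℕ} : (i : ℕ) → (Jet n j → ℝ) → Jet n (j + i) → ℝ
  | 0, f => f
  | i + 1, f => Dt (DtIter i f)

/-- `f : J^j → ℝ` is `π^j_s`-basic: it factors through the projection `J^j → J^s`. -/
def Basic {j : ℕ} (s : ℕ) (f : Jet n j → ℝ) : Prop :=
  ∃ g : Jet n s → ℝ, ∀ p, f p = g (projTo s p)

/-- The momentum function `L^r_α := Σ_{i=0}^{k−r} (−1)^i D_t^i(∂L/∂q_(r+i)^α)`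
of a `k`-th order Lagrangian, regarded as a function on `J^(2k−1)`. -/
def mom (k : ℕ) (L : Jet n k → ℝ) (r : ℕ) (α : Fin n) (p : Jet n (2 * k - 1)) : ℝ :=
  ∑ i ∈ Finset.range (k - r + 1),
    (-1 : ℝ) ^ i * DtIter i (pdq (r + i) α L) (projTo (k + i) p)

/-- The Euler–Lagrange function `L^0_α := ∂L/∂q_0^α − D_t L^1_α : J^(2k) → ℝ`. -/
def EL (k : ℕ) (L : Jet n k → ℝ) (α : Fin n) (p : Jet n (2 * k)) : ℝ :=
  pdq 0 α L (projTo k p) - Dt (mom k L 1 α) (projTo (2 * k - 1 + 1) p)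

/-- The coordinate covector `dt` on `J^j`. -/
def dt (j : ℕ) : Jet n j →L[ℝ] ℝ := ContinuousLinearMap.fst ℝ ℝ (Fin (j + 1) → Fin n → ℝ)

/-- The coordinate covector `dq_i^α` on `J^j` (zero if out of range). -/
def dq (j : ℕ) (i : ℕ) (α : Fin n) : Jet n j →L[ℝ] ℝ :=
  if h : i < j + 1 then
    (ContinuousLinearMap.proj α : (Fin n → ℝ) →L[ℝ] ℝ).comp
      (((ContinuousLinearMap.proj (⟨i, h⟩ : Fin (j + 1)) :
          (Fin (j + 1) → Fin n → ℝ) →L[ℝ] (Fin n → ℝ))).comp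
        (ContinuousLinearMap.snd ℝ ℝ (Fin (j + 1) → Fin n → ℝ)))
  else 0

/-- The Poincaré–Cartan 1-form
`Θ_L = Σ_{r=1}^k Σ_α L^r_α dq_(r−1)^α + (L − Σ_{r=1}^k Σ_α L^r_α q_r^α) dt`
of a `k`-th order Lagrangian, as a covector-valued map on `J^(2k−1)`. -/
def PC (k : ℕ) (L : Jet n k → ℝ) (p : Jet n (2 * k - 1)) : Jet n (2 * k - 1) →L[ℝ] ℝ :=
  (∑ r ∈ Finset.Icc 1 k, ∑ α : Fin n, mom k L r α p • dq (2 * k - 1) (r - 1) α) +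
    (L (projTo k p) -
        ∑ r ∈ Finset.Icc 1 k, ∑ α : Fin n, mom k L r α p * coordq r α p) • dt (2 * k - 1)

/-- `dΘ_L(p)(u,v) := (DΘ_L(p)u)(v) − (DΘ_L(p)v)(u)`, where `D` is the Fréchet derivative. -/
def dPC (k : ℕ) (L : Jet n k → ℝ) (p u v : Jet n (2 * k - 1)) : ℝ :=
  fderiv ℝ (PC k L) p u v - fderiv ℝ (PC k L) p v u

/-- The `j`-th prolongation `j^j c : ℝ → J^j` of a curve `c : ℝ → ℝ^n`. -/
def prol (j : ℕ) (c : ℝ → Fin n → ℝ) (t : ℝ) : Jet n j :=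
  (t, fun i α => iteratedDeriv (i : ℕ) c t α)

end Jet
namespace Jet

variable {n : ℕ}

open ContinuousLinearMap in
/-- The projection `projTo` as a continuous linear map. -/
def projL (n s j : ℕ) : Jet n j →L[ℝ] Jet n s :=
  (fst ℝ ℝ _).prod <| pi fun i : Fin (s + 1) =>
    if h : (i : ℕ) < j + 1 then
      ((proj (⟨(i : ℕ), h⟩ : Fin (j + 1)) : (Fin (j+1) → Fin n → ℝ) →L[ℝ] (Fin n → ℝ))).comp
        (snd ℝ ℝ _)
    else 0

lemma projTo_eq {j : ℕ} (s : ℕ) (p : Jet n j) : projTo s p = projL n s j p := by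
  refine Prod.ext rfl ?_
  funext i α
  simp only [projTo, projL, ContinuousLinearMap.prod_apply, ContinuousLinearMap.pi_apply]
  split_ifs with h <;> simp

lemma projTo_coord {j : ℕ} (s : ℕ) (i : Fin (s+1)) (α : Fin n) (p : Jet n j) :
    (projTo s p).2 i α = coordq (i : ℕ) α p := rfl

variable {j : ℕ}

lemma dq_apply (i : ℕ) (α : Fin n) (p : Jet n j) : dq j i α p = coordq i α p := by
  unfold dq coordq
  split_ifs with h <;> simp

lemma coordq_eq (i : ℕ) (α : Fin n) (p : Jet n j) (h : i < j + 1) :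
    coordq i α p = p.2 ⟨i, h⟩ α := by simp [coordq, h]

lemma vec_decomp (v : Jet n j) :
    v = v.1 • (vt : Jet n j) + ∑ i : Fin (j + 1), ∑ α : Fin n, v.2 i α • vq (i : ℕ) α := by
  refine Prod.ext ?_ ?_
  · simp [vt, vq, Prod.fst_sum]
  · funext i' α'
    simp only [Prod.smul_snd, Prod.snd_add,  Prod.snd_sum, vt, vq, smul_zero,
      Finset.sum_apply, Pi.add_apply, Pi.smul_apply, Pi.zero_apply, zero_add,
      smul_eq_mul, mul_ite, mul_one, mul_zero, Fin.val_inj]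
    rw [Finset.sum_eq_single i' (fun b _ hb => Finset.sum_eq_zero fun β _ => by
      simp [Ne.symm hb]) (by simp)]
    rw [Finset.sum_eq_single α' (fun b _ hb => by simp [Ne.symm hb]) (by simp)]
    simp

lemma fderiv_apply_eq (f : Jet n j → ℝ) (p : Jet n j) (v : Jet n j) :
    fderiv ℝ f p v = v.1 * pdt f p +
      ∑ i : Fin (j + 1), ∑ α : Fin n, v.2 i α * pdq (i : ℕ) α f p := by
  conv_lhs => rw [vec_decomp v]
  rw [map_add, map_smul, map_sum]
  simp [map_sum, map_smul, pdt, pdq, smul_eq_mul]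

/-! ### Smoothness -/

lemma contDiff_pdt {f : Jet n j → ℝ} (hf : ContDiff ℝ (⊤ : ℕ∞) f) :
    ContDiff ℝ (⊤ : ℕ∞) (pdt f) :=
  (ContinuousLinearMap.apply ℝ ℝ (vt : Jet n j)).contDiff.comp (hf.fderiv_right (by simp))

lemma contDiff_pdq {f : Jet n j → ℝ} (hf : ContDiff ℝ (⊤ : ℕ∞) f) (i : ℕ) (α : Fin n) :
    ContDiff ℝ (⊤ : ℕ∞) (pdq i α f) :=
  (ContinuousLinearMap.apply ℝ ℝ (vq i α : Jet n j)).contDiff.comp (hf.fderiv_right (by simp))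

lemma contDiff_coord (i : Fin (j+1)) (α : Fin n) :
    ContDiff ℝ (⊤ : ℕ∞) (fun p : Jet n j => p.2 i α) :=
  (((ContinuousLinearMap.proj α : (Fin n → ℝ) →L[ℝ] ℝ).comp
    (ContinuousLinearMap.proj i : (Fin (j+1) → Fin n → ℝ) →L[ℝ] (Fin n → ℝ))).comp
    (ContinuousLinearMap.snd ℝ ℝ _)).contDiff

lemma contDiff_Dt {f : Jet n j → ℝ} (hf : ContDiff ℝ (⊤ : ℕ∞) f) :
    ContDiff ℝ (⊤ : ℕ∞) (Dt f) := by
  unfold Dt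
  simp only [projTo_eq]
  refine ContDiff.add ((contDiff_pdt hf).comp (projL n j (j+1)).contDiff)
    (ContDiff.sum fun i _ => ContDiff.sum fun α _ => ContDiff.mul (contDiff_coord i.succ α)
      (((contDiff_pdq hf _ _)).comp (projL n j (j+1)).contDiff))

lemma contDiff_DtIter {f : Jet n j → ℝ} (hf : ContDiff ℝ (⊤ : ℕ∞) f) (i : ℕ) :
    ContDiff ℝ (⊤ : ℕ∞) (DtIter i f) := by
  induction i with
  | zero => exact hf
  | succ i ih => exact contDiff_Dt ih

lemma contDiff_mom {k : ℕ} {L : Jet n k → ℝ} (hL : ContDiff ℝ (⊤ : ℕ∞) L) (r : ℕ) (α : Fin n) :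
    ContDiff ℝ (⊤ : ℕ∞) (mom k L r α) := by
  unfold mom
  simp only [projTo_eq]
  exact ContDiff.sum fun i _ => contDiff_const.mul
    ((contDiff_DtIter (contDiff_pdq hL _ _) i).comp (projL n (k+i) (2*k-1)).contDiff)

lemma contDiff_coordq (i : ℕ) (α : Fin n) :
    ContDiff ℝ (⊤ : ℕ∞) (fun p : Jet n j => coordq i α p) := by
  simp only [← dq_apply]
  exact (dq j i α).contDiff

/-- The "Hamiltonian-like" coefficient of `dt` in the Poincaré–Cartan form. -/
def Hfun (k : ℕ) (L : Jet n k → ℝ) (p : Jet n (2*k-1)) : ℝ :=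
  L (projTo k p) - ∑ r ∈ Finset.Icc 1 k, ∑ α : Fin n, mom k L r α p * coordq r α p

lemma contDiff_Hfun {k : ℕ} {L : Jet n k → ℝ} (hL : ContDiff ℝ (⊤ : ℕ∞) L) :
    ContDiff ℝ (⊤ : ℕ∞) (Hfun k L) := by
  unfold Hfun
  simp only [projTo_eq]
  exact ContDiff.sub (hL.comp (projL n k (2*k-1)).contDiff)
    (ContDiff.sum fun r _ => ContDiff.sum fun α _ =>
      (contDiff_mom hL r α).mul (contDiff_coordq r α))


lemma mom_k {k : ℕ} (L : Jet n k → ℝ) (α : Fin n) (p : Jet n (2*k-1)) :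
    mom k L k α p = pdq k α L (projTo k p) := by
  simp [mom, DtIter, Nat.sub_self]

lemma hasFDerivAt_coordq (i : ℕ) (α : Fin n) (p : Jet n j) :
    HasFDerivAt (fun q : Jet n j => coordq i α q) (dq j i α) p := by
  have e : (fun q : Jet n j => coordq i α q) = ⇑(dq j i α) :=
    funext fun q => (dq_apply i α q).symm
  rw [e]
  exact (dq j i α).hasFDerivAt

lemma fderiv_PC_apply {k : ℕ} (L : Jet n k → ℝ) (hL : ContDiff ℝ (⊤ : ℕ∞) L)
    (p v w : Jet n (2*k-1)) :
    fderiv ℝ (PC k L) p v w =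
      (∑ r ∈ Finset.Icc 1 k, ∑ α : Fin n,
        fderiv ℝ (mom k L r α) p v * dq (2*k-1) (r-1) α w)
      + fderiv ℝ (Hfun k L) p v * w.1 := by
  have hP : HasFDerivAt (PC k L)
      ((∑ r ∈ Finset.Icc 1 k, ∑ α : Fin n,
          (fderiv ℝ (mom k L r α) p).smulRight (dq (2*k-1) (r-1) α))
        + (fderiv ℝ (Hfun k L) p).smulRight (dt (2*k-1))) p := by
    unfold PC
    exact HasFDerivAt.add
      (HasFDerivAt.fun_sum fun r _ => HasFDerivAt.fun_sum fun α _ =>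
        (((contDiff_mom hL r α).differentiable (by simp) p).hasFDerivAt).smul_const (dq (2*k-1) (r-1) α))
      ((((contDiff_Hfun hL).differentiable (by simp) p).hasFDerivAt).smul_const (dt (2*k-1)))
  rw [hP.fderiv]
  simp [ContinuousLinearMap.sum_apply, dt, smul_eq_mul]

lemma vert_coordq {m : ℕ} {s : ℕ} {v : Jet n m}
    (hv2 : ∀ i : Fin (m+1), (i : ℕ) ≤ s → v.2 i = 0) {i : ℕ} (hi : i ≤ s) (α : Fin n) :
    coordq i α v = 0 := by
  unfold coordq
  split_ifs with h
  · rw [hv2 ⟨i, h⟩ hi]; rfl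
  · rfl

lemma fderiv_Hfun_apply {k : ℕ} (L : Jet n k → ℝ) (hL : ContDiff ℝ (⊤ : ℕ∞) L)
    (p v : Jet n (2*k-1)) :
    fderiv ℝ (Hfun k L) p v =
      fderiv ℝ L (projL n k (2*k-1) p) (projL n k (2*k-1) v)
      - ∑ r ∈ Finset.Icc 1 k, ∑ α : Fin n,
          (mom k L r α p * coordq r α v + coordq r α p * fderiv ℝ (mom k L r α) p v) := by
  have h1 : HasFDerivAt (fun q : Jet n (2*k-1) => L (projTo k q))
      ((fderiv ℝ L (projL n k (2*k-1) p)).comp (projL n k (2*k-1))) p := by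
    simp only [projTo_eq]
    exact (((hL.differentiable (by simp)) _).hasFDerivAt).comp p
      (projL n k (2*k-1)).hasFDerivAt
  have h2 : HasFDerivAt (Hfun k L)
      (((fderiv ℝ L (projL n k (2*k-1) p)).comp (projL n k (2*k-1)))
        - ∑ r ∈ Finset.Icc 1 k, ∑ α : Fin n,
            (mom k L r α p • dq (2*k-1) r α + coordq r α p • fderiv ℝ (mom k L r α) p)) p := by
    unfold Hfun
    exact h1.sub (HasFDerivAt.fun_sum fun r _ => HasFDerivAt.fun_sum fun α _ =>
      (((contDiff_mom hL r α).differentiable (by simp) p).hasFDerivAt).mul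
        (hasFDerivAt_coordq r α p))
  rw [h2.fderiv]
  simp [ContinuousLinearMap.sum_apply, dq_apply, smul_eq_mul]

/-- For a "vertical" vector `v`, the derivative of `Hfun` in direction `v` reduces to a
combination of derivatives of the momenta. -/
lemma fderiv_Hfun_vert {k s : ℕ} (hk : 1 ≤ k) (hs1 : k - 1 ≤ s)
    (L : Jet n k → ℝ) (hL : ContDiff ℝ (⊤ : ℕ∞) L) (p v : Jet n (2*k-1))
    (hv1 : v.1 = 0) (hv2 : ∀ i : Fin (2*k-1+1), (i : ℕ) ≤ s → v.2 i = 0) :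
    fderiv ℝ (Hfun k L) p v =
      - ∑ r ∈ Finset.Icc 1 k, ∑ α : Fin n, coordq r α p * fderiv ℝ (mom k L r α) p v := by
  rw [fderiv_Hfun_apply L hL p v]
  have e1 : fderiv ℝ L (projL n k (2*k-1) p) (projL n k (2*k-1) v)
      = ∑ α : Fin n, coordq k α v * pdq k α L (projL n k (2*k-1) p) := by
    rw [fderiv_apply_eq]
    have hfst : (projL n k (2*k-1) v).1 = v.1 := rfl
    rw [hfst, hv1, zero_mul, zero_add]
    rw [Finset.sum_eq_single (Fin.last k) (fun b _ hb => Finset.sum_eq_zero fun β _ => by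
      rw [← projTo_eq, projTo_coord, vert_coordq hv2 (by
        have := Fin.val_lt_last hb; omega) β, zero_mul]) (by simp)]
    congr 1
    funext β
    rw [← projTo_eq, projTo_coord]
    rfl
  have e2 : ∀ r ∈ Finset.Icc 1 k, ∀ α : Fin n,
      mom k L r α p * coordq r α v
        = (if r = k then pdq k α L (projL n k (2*k-1) p) * coordq k α v else 0) := by
    intro r hr α
    rw [Finset.mem_Icc] at hr
    by_cases h : r = k
    · subst h
      rw [mom_k, projTo_eq, if_pos rfl]
    · rw [if_neg h, vert_coordq hv2 (by omega) α, mul_zero]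
  rw [Finset.sum_congr rfl fun r hr => Finset.sum_congr rfl fun α _ =>
    congrArg₂ (· + ·) (e2 r hr α) rfl]
  rw [e1]
  rw [Finset.sum_congr rfl fun r _ => Finset.sum_add_distrib, Finset.sum_add_distrib]
  have e3 : ∀ r : ℕ, (∑ α : Fin n,
      if r = k then pdq k α L (projL n k (2*k-1) p) * coordq k α v else 0)
      = if r = k then ∑ α : Fin n, coordq k α v * pdq k α L (projL n k (2*k-1) p) else 0 := by
    intro r
    split_ifs with h <;> simp [mul_comm]
  rw [Finset.sum_congr rfl fun r _ => e3 r]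
  rw [Finset.sum_ite_eq' (Finset.Icc 1 k) k]
  simp only [Finset.mem_Icc, hk, le_refl, and_self, if_true]
  ring

/-! ### Basic functions -/

/-- The linear map zeroing out all coordinates `q_i`, `i > s`. -/
def ZL (s j : ℕ) : Jet n j →L[ℝ] Jet n j := (projL n j s).comp (projL n s j)

lemma ZL_eq (s : ℕ) (p : Jet n j) : ZL s j p = projTo j (projTo s p) := by
  simp only [ZL, ContinuousLinearMap.comp_apply, ← projTo_eq]

lemma ZL_fst (s : ℕ) (p : Jet n j) : (ZL s j p).1 = p.1 := by rw [ZL_eq]; rfl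

lemma ZL_coord (s : ℕ) (p : Jet n j) (i : Fin (j+1)) (α : Fin n) :
    (ZL s j p).2 i α = if (i : ℕ) < s + 1 then p.2 i α else 0 := by
  rw [ZL_eq, projTo_coord, coordq]
  split_ifs with h
  · rw [projTo_coord, coordq_eq _ _ _ i.isLt, Fin.eta]
  · rfl

lemma projTo_ZL {s : ℕ} (hs : s ≤ j) (p : Jet n j) : projTo s (ZL s j p) = projTo s p := by
  refine Prod.ext (ZL_fst s p) ?_
  funext i α
  rw [projTo_coord, projTo_coord]
  have hij : (i : ℕ) < j + 1 := by have := i.isLt; omega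
  rw [coordq_eq _ _ _ hij, coordq_eq _ _ _ hij, ZL_coord, if_pos (by exact i.isLt)]

lemma basic_iff {s : ℕ} (hs : s ≤ j) (f : Jet n j → ℝ) :
    Basic s f ↔ ∀ p, f p = f (ZL s j p) := by
  constructor
  · rintro ⟨g, hg⟩ p
    rw [hg, hg, projTo_ZL hs]
  · intro h
    refine ⟨fun q => f (projTo j q), fun p => ?_⟩
    rw [h p, ZL_eq]

lemma ZL_vq {s : ℕ} {i : ℕ} (hi : s < i) (β : Fin n) : ZL s j (vq i β) = 0 := by
  refine Prod.ext (ZL_fst s _) ?_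
  funext i' α'
  rw [ZL_coord]
  split_ifs with h
  · simp [vq, show (i' : ℕ) ≠ i by omega]
  · rfl

lemma pdq_zero_of_basic {s : ℕ} (hs : s ≤ j) {f : Jet n j → ℝ} (hf : ContDiff ℝ (⊤ : ℕ∞) f)
    (hb : Basic s f) {i : ℕ} (hi : s < i) (β : Fin n) (p : Jet n j) : pdq i β f p = 0 := by
  have h := (basic_iff hs f).1 hb
  have e : f = f ∘ ⇑(ZL s j) := funext fun q => h q
  show fderiv ℝ f p (vq i β) = 0
  conv_lhs => rw [e]
  rw [fderiv_comp p ((hf.differentiable (by simp)) _)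
    (ZL s j).differentiableAt, (ZL s j).fderiv]
  simp [ZL_vq hi β]

lemma basic_of_pdq {s : ℕ} (hs : s ≤ j) {f : Jet n j → ℝ} (hf : ContDiff ℝ (⊤ : ℕ∞) f)
    (h : ∀ i : ℕ, s < i → i < j + 1 → ∀ β p, pdq i β f p = 0) : Basic s f := by
  rw [basic_iff hs f]
  intro p
  set d : Jet n j := p - ZL s j p with hd
  have hder : ∀ u : ℝ, HasDerivAt (fun u : ℝ => f (ZL s j p + u • d)) 0 u := by
    intro u
    have hpath : HasDerivAt (fun u : ℝ => ZL s j p + u • d) d u := by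
      simpa using ((hasDerivAt_id u).smul_const d).const_add (ZL s j p)
    have hfd := ((hf.differentiable (by simp)) (ZL s j p + u • d)).hasFDerivAt
    have hcomp := hfd.comp_hasDerivAt u hpath
    refine hcomp.congr_deriv (Eq.symm ?_)
    rw [fderiv_apply_eq]
    have hd1 : d.1 = 0 := by rw [hd, Prod.fst_sub, ZL_fst, sub_self]
    rw [hd1, zero_mul, zero_add]
    refine (Finset.sum_eq_zero fun i _ => Finset.sum_eq_zero fun β _ => ?_).symm
    by_cases hi : (i : ℕ) ≤ s
    · have hz : d.2 i β = 0 := by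
        rw [hd, Prod.snd_sub]
        show p.2 i β - (ZL s j p).2 i β = 0
        rw [ZL_coord, if_pos (by omega), sub_self]
      rw [hz, zero_mul]
    · rw [h i (by omega) i.isLt β _, mul_zero]
  have hconst := is_const_of_deriv_eq_zero (fun u => (hder u).differentiableAt)
    (fun u => (hder u).deriv) 1 0
  simpa [hd] using hconst

/-! ### The equivalences -/

lemma dq_vq (i i' : ℕ) (α α' : Fin n) (h : i < j + 1) :
    dq j i α (vq i' α') = if i = i' ∧ α = α' then 1 else 0 := by
  rw [dq_apply, coordq_eq _ _ _ h]
  simp [vq]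

lemma vq_vert {s : ℕ} {i : ℕ} (hi : s < i) (β : Fin n) :
    ∀ i' : Fin (j + 1), (i' : ℕ) ≤ s → (vq i β : Jet n j).2 i' = 0 := by
  intro i' hi'
  funext α'
  simp [vq, show (i' : ℕ) ≠ i by omega]

lemma fderiv_mom_vert {k s : ℕ} (L : Jet n k → ℝ)
    (hP3 : ∀ r ∈ Finset.Icc 1 k, ∀ j : ℕ, s < j → j ≤ 2 * k - 1 →
      ∀ (α β : Fin n) (p : Jet n (2 * k - 1)), pdq j β (mom k L r α) p = 0)
    {r : ℕ} (hr : r ∈ Finset.Icc 1 k) (α : Fin n) (p v : Jet n (2 * k - 1))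
    (hv1 : v.1 = 0) (hv2 : ∀ i : Fin (2 * k - 1 + 1), (i : ℕ) ≤ s → v.2 i = 0) :
    fderiv ℝ (mom k L r α) p v = 0 := by
  rw [fderiv_apply_eq, hv1, zero_mul, zero_add]
  refine Finset.sum_eq_zero fun i _ => Finset.sum_eq_zero fun β _ => ?_
  by_cases hi : (i : ℕ) ≤ s
  · rw [show v.2 i β = 0 from by rw [hv2 i hi]; rfl, zero_mul]
  · have hib : (i : ℕ) ≤ 2 * k - 1 := by have := i.isLt; omega
    rw [hP3 r hr i (by omega) hib α β p, mul_zero]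

lemma dPC_vert {k s : ℕ} (hk : 1 ≤ k) (hs1 : k - 1 ≤ s)
    (L : Jet n k → ℝ) (hL : ContDiff ℝ (⊤ : ℕ∞) L) (p v w : Jet n (2 * k - 1))
    (hv1 : v.1 = 0) (hv2 : ∀ i : Fin (2 * k - 1 + 1), (i : ℕ) ≤ s → v.2 i = 0) :
    dPC k L p v w = (∑ r ∈ Finset.Icc 1 k, ∑ α : Fin n,
        fderiv ℝ (mom k L r α) p v * dq (2 * k - 1) (r - 1) α w)
      + fderiv ℝ (Hfun k L) p v * w.1 := by
  unfold dPC
  rw [fderiv_PC_apply L hL p v w, fderiv_PC_apply L hL p w v]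
  have hz : ∀ r ∈ Finset.Icc 1 k, ∀ α : Fin n, dq (2 * k - 1) (r - 1) α v = 0 := by
    intro r hr α
    rw [Finset.mem_Icc] at hr
    rw [dq_apply, vert_coordq hv2 (by omega) α]
  have hz2 : ∑ r ∈ Finset.Icc 1 k, ∑ α : Fin n,
      fderiv ℝ (mom k L r α) p w * dq (2 * k - 1) (r - 1) α v = 0 :=
    Finset.sum_eq_zero fun r hr => Finset.sum_eq_zero fun α _ => by
      rw [hz r hr α, mul_zero]
  rw [hz2, hv1, mul_zero, add_zero]
  ring

lemma p2_iff_p3 {k s : ℕ} (hk : 1 ≤ k) (hs1 : k - 1 ≤ s) (hs2 : s ≤ 2 * k - 2)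
    (L : Jet n k → ℝ) (hL : ContDiff ℝ (⊤ : ℕ∞) L) :
    (∀ p v : Jet n (2 * k - 1), v.1 = 0 →
        (∀ i : Fin (2 * k - 1 + 1), (i : ℕ) ≤ s → v.2 i = 0) →
        ∀ w : Jet n (2 * k - 1), dPC k L p v w = 0) ↔
      (∀ r ∈ Finset.Icc 1 k, ∀ j : ℕ, s < j → j ≤ 2 * k - 1 →
        ∀ (α β : Fin n) (p : Jet n (2 * k - 1)), pdq j β (mom k L r α) p = 0) := by
  constructor
  · intro h2 r hr jj hjj1 hjj2 α β p
    rw [Finset.mem_Icc] at hr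
    have hv1 : (vq jj β : Jet n (2 * k - 1)).1 = 0 := rfl
    have hv2 := vq_vert (j := 2 * k - 1) (s := s) hjj1 β
    have h := h2 p (vq jj β) hv1 hv2 (vq (r - 1) α)
    rw [dPC_vert hk hs1 L hL _ _ _ hv1 hv2] at h
    have hw1 : (vq (r - 1) α : Jet n (2 * k - 1)).1 = 0 := rfl
    rw [hw1, mul_zero, add_zero] at h
    rw [Finset.sum_eq_single r (fun r' hr' hne => Finset.sum_eq_zero fun α' _ => by
        rw [Finset.mem_Icc] at hr'
        rw [dq_vq _ _ _ _ (by omega), if_neg (by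
          rintro ⟨h1, -⟩
          exact hne (by omega)), mul_zero])
      (fun hnr => absurd (Finset.mem_Icc.mpr ⟨hr.1, hr.2⟩) hnr)] at h
    rw [Finset.sum_eq_single α (fun α' _ hne => by
        rw [dq_vq _ _ _ _ (by omega), if_neg (by rintro ⟨-, h2'⟩; exact hne h2'), mul_zero])
      (by simp)] at h
    rw [dq_vq _ _ _ _ (by omega), if_pos ⟨rfl, rfl⟩, mul_one] at h
    exact h
  · intro h3 p v hv1 hv2 w
    rw [dPC_vert hk hs1 L hL p v w hv1 hv2]
    rw [fderiv_Hfun_vert hk hs1 L hL p v hv1 hv2]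
    have hzz : ∑ r ∈ Finset.Icc 1 k, ∑ α : Fin n,
        fderiv ℝ (mom k L r α) p v * dq (2 * k - 1) (r - 1) α w = 0 :=
      Finset.sum_eq_zero fun r hr => Finset.sum_eq_zero fun α _ => by
        rw [fderiv_mom_vert L h3 hr α p v hv1 hv2, zero_mul]
    have hzz2 : ∑ r ∈ Finset.Icc 1 k, ∑ α : Fin n,
        coordq r α p * fderiv ℝ (mom k L r α) p v = 0 :=
      Finset.sum_eq_zero fun r hr => Finset.sum_eq_zero fun α _ => by
        rw [fderiv_mom_vert L h3 hr α p v hv1 hv2, mul_zero]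
    rw [hzz, hzz2]
    simp

lemma p1_iff_p3 {k s : ℕ} (hk : 1 ≤ k) (hs1 : k - 1 ≤ s) (hs2 : s ≤ 2 * k - 2)
    (L : Jet n k → ℝ) (hL : ContDiff ℝ (⊤ : ℕ∞) L) :
    ((∀ r ∈ Finset.Icc 1 k, ∀ α : Fin n, Basic s (mom k L r α)) ∧
        Basic s (fun p : Jet n (2 * k - 1) =>
          L (projTo k p) -
            ∑ r ∈ Finset.Icc 1 k, ∑ α : Fin n, mom k L r α p * coordq r α p)) ↔
      (∀ r ∈ Finset.Icc 1 k, ∀ j : ℕ, s < j → j ≤ 2 * k - 1 →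
        ∀ (α β : Fin n) (p : Jet n (2 * k - 1)), pdq j β (mom k L r α) p = 0) := by
  have hsm : s ≤ 2 * k - 1 := by omega
  constructor
  · rintro ⟨h1, -⟩ r hr jj hjj1 hjj2 α β p
    exact pdq_zero_of_basic hsm (contDiff_mom hL r α) (h1 r hr α) hjj1 β p
  · intro h3
    constructor
    · intro r hr α
      refine basic_of_pdq hsm (contDiff_mom hL r α) fun i hi hib β p => ?_
      exact h3 r hr i hi (by omega) α β p
    · show Basic s (Hfun k L)
      refine basic_of_pdq hsm (contDiff_Hfun hL) fun i hi hib β p => ?_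
      show fderiv ℝ (Hfun k L) p (vq i β) = 0
      have hv1 : (vq i β : Jet n (2 * k - 1)).1 = 0 := rfl
      have hv2 := vq_vert (j := 2 * k - 1) (s := s) hi β
      rw [fderiv_Hfun_vert hk hs1 L hL p _ hv1 hv2]
      have hzz2 : ∑ r ∈ Finset.Icc 1 k, ∑ α : Fin n,
          coordq r α p * fderiv ℝ (mom k L r α) p (vq i β) = 0 :=
        Finset.sum_eq_zero fun r hr => Finset.sum_eq_zero fun α _ => by
          rw [fderiv_mom_vert L h3 hr α p _ hv1 hv2, mul_zero]
      rw [hzz2]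
      exact neg_zero

end Jet

/-- Projectability of the Poincaré–Cartan form, mechanics.
For `k−1 ≤ s ≤ 2k−2`, the following are equivalent:
(1) all the coefficient functions `L^r_α` and `L − Σ_r Σ_α L^r_α q_r^α` of `Θ_L` are
`π^(2k−1)_s`-basic;
(2) `i(v)dΘ_L(p) = 0` for every `p` and every vertical vector `v` (vanishing `t`- and
`q_0, …, q_s`-components);
(3) `∂L^r_α/∂q_j^β = 0` on `J^(2k−1)` for every `r = 1, …, k`, `s < j ≤ 2k−1`, `α`, `β`. -/
theorem stmt2 {n : ℕ} (hn : 1 ≤ n) (k s : ℕ) (hk : 1 ≤ k)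
    (hs1 : k - 1 ≤ s) (hs2 : s ≤ 2 * k - 2)
    (L : Jet n k → ℝ) (hL : ContDiff ℝ (⊤ : ℕ∞) L) :
    (((∀ r ∈ Finset.Icc 1 k, ∀ α : Fin n, Jet.Basic s (Jet.mom k L r α)) ∧
        Jet.Basic s (fun p : Jet n (2 * k - 1) =>
          L (Jet.projTo k p) -
            ∑ r ∈ Finset.Icc 1 k, ∑ α : Fin n, Jet.mom k L r α p * Jet.coordq r α p)) ↔
      (∀ p v : Jet n (2 * k - 1), v.1 = 0 →
        (∀ i : Fin (2 * k - 1 + 1), (i : ℕ) ≤ s → v.2 i = 0) →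
        ∀ w : Jet n (2 * k - 1), Jet.dPC k L p v w = 0)) ∧
    ((∀ p v : Jet n (2 * k - 1), v.1 = 0 →
        (∀ i : Fin (2 * k - 1 + 1), (i : ℕ) ≤ s → v.2 i = 0) →
        ∀ w : Jet n (2 * k - 1), Jet.dPC k L p v w = 0) ↔
      (∀ r ∈ Finset.Icc 1 k, ∀ j : ℕ, s < j → j ≤ 2 * k - 1 →
        ∀ (α β : Fin n) (p : Jet n (2 * k - 1)), Jet.pdq j β (Jet.mom k L r α) p = 0)) := by
  exact ⟨(Jet.p1_iff_p3 hk hs1 hs2 L hL).trans (Jet.p2_iff_p3 hk hs1 hs2 L hL).symm,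
    Jet.p2_iff_p3 hk hs1 hs2 L hL⟩
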